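/- arXiv:1905.10274 — 2 statements merged into one kernel-verified Lean document; each statement's English description precedes it below -/
import Mathlib

section
/- For every ν < 0 and all reals x, the ratio R̃_ν(x) := D_{ν−1}(x)² / (D_ν(x) · D_{ν−2}(x)) satisfies 1 < R̃_ν(x) < (ν−1)/ν. -/
open MeasureTheory Real Filter

noncomputable def G (ν x : ℝ) : ℝ :=
  ∫ t in Set.Ioi (0:ℝ), t ^ (-ν - 1) * Real.exp (-t^2/2 - x*t)

noncomputable def D (ν x : ℝ) : ℝ :=
  Real.exp (-x^2/4) / Real.Gamma (-ν) * G ν x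

/-!
Write `G ν = ∫₀^∞ t^(-ν-1) e^(-t²/2 - x t) dt`, so that `D ν = e^(-x²/4) G ν / Γ(-ν)` and, by
`Γ(s+1) = s Γ(s)`, the ratio equals `(ν-1)/ν · G(ν-1)² / (G ν · G(ν-2))`.
The upper bound is the strict Cauchy–Schwarz inequality `G(ν-1)² < G ν · G(ν-2)` for the moments
of the positive weight `t^(-ν-1) e^(-t²/2 - x t)`. Integration by parts gives the recurrence
`-ν G ν = G(ν-2) + x G(ν-1)`; using it at `ν` and `ν-1` together with Cauchy–Schwarz at `ν-1`,
`-ν G ν G(ν-2) = G(ν-2)² + x G(ν-1) G(ν-2) < G(ν-1) G(ν-3) + x G(ν-1) G(ν-2) = (1-ν) G(ν-1)²`,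
which is the lower bound.
-/

open Set Topology

noncomputable def kernel (ν x t : ℝ) : ℝ :=
  t ^ (-ν - 1) * exp (-t ^ 2 / 2 - x * t)

lemma G_eq_integral_kernel (ν x : ℝ) : G ν x = ∫ t in Ioi 0, kernel ν x t := rfl

lemma kernel_pos (ν x : ℝ) {t : ℝ} (ht : 0 < t) : 0 < kernel ν x t :=
  mul_pos (rpow_pos_of_pos ht _) (exp_pos _)

lemma kernel_sub_one (ν x : ℝ) {t : ℝ} (ht : 0 < t) :
    kernel (ν - 1) x t = t * kernel ν x t := by
  rw [kernel, kernel, show -(ν - 1) - 1 = (-ν - 1) + 1 by ring, rpow_add_one ht.ne']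
  ring

lemma kernel_sub_two (ν x : ℝ) {t : ℝ} (ht : 0 < t) :
    kernel (ν - 2) x t = t ^ 2 * kernel ν x t := by
  rw [show ν - 2 = ν - 1 - 1 by ring, kernel_sub_one _ x ht, kernel_sub_one ν x ht]
  ring

lemma measurable_kernel (ν x : ℝ) : Measurable (kernel ν x) := by
  unfold kernel; fun_prop

lemma exp_neg_sq_div_two_sub_mul_le (x t : ℝ) :
    exp (-t ^ 2 / 2 - x * t) ≤ exp ((x - 1) ^ 2 / 2) * exp (-t) := by
  rw [← exp_add]
  exact exp_le_exp.mpr (by nlinarith [sq_nonneg (t + x - 1)])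

lemma kernel_le (ν x : ℝ) {t : ℝ} (ht : 0 ≤ t) :
    kernel ν x t ≤ exp ((x - 1) ^ 2 / 2) * (exp (-t) * t ^ (-ν - 1)) := by
  calc kernel ν x t ≤ t ^ (-ν - 1) * (exp ((x - 1) ^ 2 / 2) * exp (-t)) :=
        mul_le_mul_of_nonneg_left (exp_neg_sq_div_two_sub_mul_le x t) (rpow_nonneg ht _)
    _ = _ := by ring

lemma integrableOn_kernel {ν : ℝ} (hν : ν < 0) (x : ℝ) : IntegrableOn (kernel ν x) (Ioi 0) := by
  refine ((GammaIntegral_convergent (s := -ν) (by linarith)).const_mul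
    (exp ((x - 1) ^ 2 / 2))).mono' (measurable_kernel ν x).aestronglyMeasurable ?_
  filter_upwards [ae_restrict_mem measurableSet_Ioi] with t (ht : 0 < t)
  rw [norm_of_nonneg (kernel_pos ν x ht).le]
  exact kernel_le ν x ht.le

lemma setIntegral_Ioi_pos {f : ℝ → ℝ} {a b : ℝ} (hf : IntegrableOn f (Ioi a))
    (hnonneg : ∀ t ∈ Ioi a, 0 ≤ f t) (hpos : ∀ t ∈ Ioi b, a < t → 0 < f t) :
    0 < ∫ t in Ioi a, f t := by
  rw [setIntegral_pos_iff_support_of_nonneg_ae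
    ((ae_restrict_iff' measurableSet_Ioi).mpr (.of_forall hnonneg)) hf]
  refine lt_of_lt_of_le ?_ (measure_mono (s := Ioi (max a b)) fun t ht => ?_)
  · simp
  · obtain ⟨hat, hbt⟩ := max_lt_iff.mp (mem_Ioi.mp ht)
    exact ⟨(hpos t hbt hat).ne', hat⟩

lemma G_pos {ν : ℝ} (hν : ν < 0) (x : ℝ) : 0 < G ν x :=
  setIntegral_Ioi_pos (b := 0) (integrableOn_kernel hν x) (fun _ ht => (kernel_pos ν x ht).le)
    fun _ _ ht => kernel_pos ν x ht

lemma kernel_mul_sq_sub (ν x c : ℝ) {t : ℝ} (ht : 0 < t) :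
    kernel ν x t * (t - c) ^ 2 =
      kernel (ν - 2) x t - 2 * c * kernel (ν - 1) x t + c ^ 2 * kernel ν x t := by
  rw [kernel_sub_two ν x ht, kernel_sub_one ν x ht]
  ring

lemma integrableOn_kernel_mul_sq_sub {ν : ℝ} (hν : ν < 0) (x c : ℝ) :
    IntegrableOn (fun t => kernel ν x t * (t - c) ^ 2) (Ioi 0) :=
  (((integrableOn_kernel (by linarith) x).sub
    ((integrableOn_kernel (by linarith) x).const_mul (2 * c))).add
    ((integrableOn_kernel hν x).const_mul (c ^ 2))).congr_fun
    (fun _ ht => (kernel_mul_sq_sub ν x c ht).symm) measurableSet_Ioi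

lemma integral_kernel_mul_sq_sub {ν : ℝ} (hν : ν < 0) (x c : ℝ) :
    ∫ t in Ioi 0, kernel ν x t * (t - c) ^ 2 =
      G ν x * (c * c) + -2 * G (ν - 1) x * c + G (ν - 2) x := by
  have h2 := integrableOn_kernel (ν := ν - 2) (by linarith) x
  have h1 := (integrableOn_kernel (ν := ν - 1) (by linarith) x).const_mul (2 * c)
  rw [setIntegral_congr_fun measurableSet_Ioi fun _ ht => kernel_mul_sq_sub ν x c ht,
    integral_add (by exact h2.sub h1) ((integrableOn_kernel hν x).const_mul _),
    integral_sub h2 h1, integral_const_mul, integral_const_mul]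
  simp only [← G_eq_integral_kernel]
  ring

lemma sq_G_sub_one_lt {ν : ℝ} (hν : ν < 0) (x : ℝ) :
    G (ν - 1) x ^ 2 < G ν x * G (ν - 2) x := by
  -- `c ↦ ∫ kernel ν x t * (t - c) ^ 2` is a positive quadratic, so its discriminant is negative
  have hdisc := discrim_lt_zero (G_pos hν x).ne' fun c => by
    rw [← integral_kernel_mul_sq_sub hν x c]
    exact setIntegral_Ioi_pos (b := c) (integrableOn_kernel_mul_sq_sub hν x c)
      (fun t ht => mul_nonneg (kernel_pos ν x ht).le (sq_nonneg _))
      fun t hct ht => mul_pos (kernel_pos ν x ht) (pow_pos (sub_pos.mpr hct) 2)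
  rw [discrim] at hdisc
  linarith

lemma hasDerivAt_kernel_sub_one (ν x : ℝ) {t : ℝ} (ht : 0 < t) :
    HasDerivAt (kernel (ν - 1) x)
      (-ν * kernel ν x t - kernel (ν - 2) x t - x * kernel (ν - 1) x t) t := by
  have hfun : kernel (ν - 1) x = fun u => u ^ (-ν) * exp (-u ^ 2 / 2 - x * u) := by
    funext u; rw [kernel, show -(ν - 1) - 1 = -ν by ring]
  have hexp : HasDerivAt (fun u => -u ^ 2 / 2 - x * u) (-t - x) t := by
    refine (((hasDerivAt_pow 2 t).neg.div_const 2).sub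
      ((hasDerivAt_id t).const_mul x)).congr_deriv ?_
    push_cast; ring
  have hpow : t ^ (-ν) = t ^ (-ν - 1) * t := by rw [← rpow_add_one ht.ne', sub_add_cancel]
  rw [kernel_sub_two ν x ht, kernel_sub_one ν x ht, hfun]
  refine ((hasDerivAt_rpow_const (p := -ν) (Or.inl ht.ne')).mul hexp.exp).congr_deriv ?_
  rw [kernel, hpow]
  ring

lemma continuousAt_kernel_zero {ν : ℝ} (hν : ν ≤ -1) (x : ℝ) : ContinuousAt (kernel ν x) 0 :=
  (continuousAt_rpow_const 0 _ (Or.inr (by linarith))).mul (by fun_prop)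

lemma kernel_zero {ν : ℝ} (hν : ν < -1) (x : ℝ) : kernel ν x 0 = 0 := by
  rw [kernel, zero_rpow (by linarith), zero_mul]

lemma tendsto_kernel_atTop (ν x : ℝ) : Tendsto (kernel ν x) atTop (𝓝 0) := by
  have hlim : Tendsto (fun t => exp ((x - 1) ^ 2 / 2) * (exp (-t) * t ^ (-ν - 1))) atTop (𝓝 0) := by
    simpa [mul_comm (exp _)] using
      (tendsto_rpow_mul_exp_neg_mul_atTop_nhds_zero (-ν - 1) 1 one_pos).const_mul
        (exp ((x - 1) ^ 2 / 2))
  refine squeeze_zero' ?_ ?_ hlim <;> filter_upwards [eventually_gt_atTop 0] with t ht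
  · exact (kernel_pos ν x ht).le
  · exact kernel_le ν x ht.le

lemma neg_mul_G {ν : ℝ} (hν : ν < 0) (x : ℝ) :
    -ν * G ν x = G (ν - 2) x + x * G (ν - 1) x := by
  have h0 := (integrableOn_kernel hν x).const_mul (-ν)
  have h1 := (integrableOn_kernel (ν := ν - 1) (by linarith) x).const_mul x
  have h2 := integrableOn_kernel (ν := ν - 2) (by linarith) x
  have hibp := integral_Ioi_of_hasDerivAt_of_tendsto
    (continuousAt_kernel_zero (ν := ν - 1) (by linarith) x).continuousWithinAt
    (fun _ ht => hasDerivAt_kernel_sub_one ν x ht) (by exact (h0.sub h2).sub h1)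
    (tendsto_kernel_atTop (ν - 1) x)
  rw [integral_sub (by exact h0.sub h2) h1, integral_sub h0 h2, integral_const_mul,
    integral_const_mul, kernel_zero (by linarith)] at hibp
  simp only [← G_eq_integral_kernel] at hibp
  linarith

lemma neg_mul_G_mul_G_sub_two_lt {ν : ℝ} (hν : ν < 0) (x : ℝ) :
    -ν * (G ν x * G (ν - 2) x) < (1 - ν) * G (ν - 1) x ^ 2 := by
  have hcs := sq_G_sub_one_lt (ν := ν - 1) (by linarith) x
  have hrec := neg_mul_G (ν := ν - 1) (by linarith) x
  rw [show ν - 1 - 1 = ν - 2 by ring, show ν - 1 - 2 = ν - 3 by ring] at hcs hrec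
  calc -ν * (G ν x * G (ν - 2) x) = G (ν - 2) x ^ 2 + x * G (ν - 1) x * G (ν - 2) x := by
        linear_combination G (ν - 2) x * neg_mul_G hν x
    _ < G (ν - 1) x * G (ν - 3) x + x * G (ν - 1) x * G (ν - 2) x := by gcongr
    _ = (1 - ν) * G (ν - 1) x ^ 2 := by linear_combination (-G (ν - 1) x) * hrec

lemma Gamma_neg_sub_one {ν : ℝ} (hν : ν ≠ 0) : Gamma (-(ν - 1)) = -ν * Gamma (-ν) := by
  rw [show -(ν - 1) = -ν + 1 by ring, Gamma_add_one (neg_ne_zero.mpr hν)]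

lemma D_sq_div_eq {ν : ℝ} (hν : ν < 0) (x : ℝ) :
    D (ν - 1) x ^ 2 / (D ν x * D (ν - 2) x) =
      (ν - 1) / ν * (G (ν - 1) x ^ 2 / (G ν x * G (ν - 2) x)) := by
  have hΓ1 := Gamma_neg_sub_one hν.ne
  have hΓ2 := Gamma_neg_sub_one (ν := ν - 1) (by linarith)
  rw [show ν - 1 - 1 = ν - 2 by ring, hΓ1] at hΓ2
  have hΓ := (Gamma_pos_of_pos (neg_pos.mpr hν)).ne'
  have hG0 := (G_pos hν x).ne'
  have hG2 := (G_pos (ν := ν - 2) (by linarith) x).ne'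
  have hν1 : ν - 1 ≠ 0 := by linarith
  simp only [D, hΓ1, hΓ2]
  field_simp

theorem stmt7 (ν : ℝ) (hν : ν < 0) (x : ℝ) :
    1 < (D (ν - 1) x) ^ 2 / (D ν x * D (ν - 2) x) ∧
      (D (ν - 1) x) ^ 2 / (D ν x * D (ν - 2) x) < (ν - 1) / ν := by
  have hprod : 0 < G ν x * G (ν - 2) x := mul_pos (G_pos hν x) (G_pos (by linarith) x)
  have hlower := neg_mul_G_mul_G_sub_two_lt hν x
  have hupper : G (ν - 1) x ^ 2 / (G ν x * G (ν - 2) x) < 1 :=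
    (div_lt_one hprod).mpr (sq_G_sub_one_lt hν x)
  rw [D_sq_div_eq hν x]
  constructor
  · rw [div_mul_div_comm, lt_div_iff_of_neg (by nlinarith)]
    linarith
  · exact mul_lt_of_lt_one_right (div_pos_of_neg_of_neg (by linarith) hν) hupper
end

section
/- For every ν < 0, the function x ↦ D_{ν−1}(x)² / (D_ν(x) · D_{ν−2}(x)) is strictly decreasing on ℝ. -/
open MeasureTheory Real Filter

/-!
Put `a = -ν - 1 > -1` and `M s x = ∫₀^∞ t^s e^{-t²/2 - xt} dt`. Up to the positive constant
`Γ(-ν) Γ(2-ν) / Γ(1-ν)²` the ratio is `M_{a+1}² / (M_a M_{a+2})`, the Gaussian factors cancelling.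
Since `∂ₓ M_s = -M_{s+1}`, its derivative is `-M_{a+1} Δ / (M_a M_{a+2})²` with
`Δ = 2 M_a M_{a+2}² - M_{a+1}² M_{a+2} - M_a M_{a+1} M_{a+3}`. Integration by parts gives
`M_{s+2} = (s+1) M_s - x M_{s+1}`, and these recurrences turn `Δ` into the determinant of the
Hankel matrix `(M_{a+i+j})_{i,j<3}`. That matrix is the Gram matrix of `1, t, t²` for the measure
`t^a e^{-t²/2 - xt} dt` on `(0, ∞)`, hence positive definite, so `Δ > 0`.
-/

open Set Polynomial Topology Matrix

theorem setIntegral_pos_of_continuousOn {X : Type*} [TopologicalSpace X] [MeasurableSpace X]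
    [OpensMeasurableSpace X] {μ : Measure X} [μ.IsOpenPosMeasure] {f : X → ℝ} {s : Set X}
    (hs : IsOpen s) (hf : ContinuousOn f s) (hfi : IntegrableOn f s μ) (hf0 : ∀ t ∈ s, 0 ≤ f t)
    {t₀ : X} (ht₀ : t₀ ∈ s) (hft₀ : f t₀ ≠ 0) : 0 < ∫ t in s, f t ∂μ := by
  rw [setIntegral_pos_iff_support_of_nonneg_ae (ae_restrict_of_forall_mem hs.measurableSet hf0) hfi]
  refine ((hf.isOpen_inter_preimage hs isOpen_compl_singleton).measure_pos μ ⟨t₀, ht₀, hft₀⟩).trans_le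
    (measure_mono ?_)
  rintro t ⟨hts, hft⟩
  exact ⟨hft, hts⟩

theorem Polynomial.exists_pos_eval_ne_zero {q : ℝ[X]} (hq : q ≠ 0) : ∃ t > 0, q.eval t ≠ 0 := by
  by_contra! h
  exact hq (q.eq_zero_of_infinite_isRoot ((Ioi_infinite 0).mono h))

noncomputable def gaussMoment (s x : ℝ) : ℝ :=
  ∫ t in Ioi 0, t ^ s * exp (-t ^ 2 / 2 - x * t)

theorem G_eq_gaussMoment (ν x : ℝ) : G ν x = gaussMoment (-ν - 1) x := rfl

theorem continuousOn_gaussMoment_integrand (s x : ℝ) :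
    ContinuousOn (fun t : ℝ => t ^ s * exp (-t ^ 2 / 2 - x * t)) (Ioi 0) :=
  (continuousOn_id.rpow_const fun _ ht => Or.inl (ne_of_gt ht)).mul (by fun_prop)

theorem exp_gaussian_le (x t : ℝ) : exp (-t ^ 2 / 2 - x * t) ≤ exp ((1 - x) ^ 2 / 2) * exp (-t) := by
  rw [← exp_add]
  exact exp_le_exp.2 (by nlinarith [sq_nonneg (t - (1 - x))])

theorem hasDerivAt_exp_gaussian (x t : ℝ) :
    HasDerivAt (fun u => exp (-u ^ 2 / 2 - x * u)) (-(t + x) * exp (-t ^ 2 / 2 - x * t)) t := by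
  have h : HasDerivAt (fun u : ℝ => -u ^ 2 / 2 - x * u) (-(t + x)) t :=
    (((hasDerivAt_pow 2 t).neg.div_const 2).sub ((hasDerivAt_id t).const_mul x)).congr_deriv
      (by norm_num; ring)
  simpa only [mul_comm] using h.exp

theorem integrableOn_gaussMoment_integrand {s : ℝ} (hs : -1 < s) (x : ℝ) :
    IntegrableOn (fun t : ℝ => t ^ s * exp (-t ^ 2 / 2 - x * t)) (Ioi 0) := by
  have hg : IntegrableOn (fun t : ℝ => exp ((1 - x) ^ 2 / 2) * (exp (-t) * t ^ (s + 1 - 1)))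
      (Ioi 0) := (GammaIntegral_convergent (by linarith)).const_mul _
  refine hg.mono' ((continuousOn_gaussMoment_integrand s x).aestronglyMeasurable measurableSet_Ioi)
    (ae_restrict_of_forall_mem measurableSet_Ioi fun t (ht : 0 < t) => ?_)
  rw [add_sub_cancel_right, norm_of_nonneg (by positivity)]
  calc t ^ s * exp (-t ^ 2 / 2 - x * t) ≤ t ^ s * (exp ((1 - x) ^ 2 / 2) * exp (-t)) := by
        gcongr; exact exp_gaussian_le x t
    _ = _ := by ring

theorem tendsto_gaussMoment_integrand_atTop (s x : ℝ) :
    Tendsto (fun t : ℝ => t ^ s * exp (-t ^ 2 / 2 - x * t)) atTop (𝓝 0) := by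
  have hdom := (tendsto_rpow_mul_exp_neg_mul_atTop_nhds_zero s 1 one_pos).const_mul
    (exp ((1 - x) ^ 2 / 2))
  rw [mul_zero] at hdom
  refine squeeze_zero' ?_ ?_ hdom
  · filter_upwards [eventually_gt_atTop 0] with t ht using by positivity
  · filter_upwards [eventually_gt_atTop 0] with t ht
    calc t ^ s * exp (-t ^ 2 / 2 - x * t) ≤ t ^ s * (exp ((1 - x) ^ 2 / 2) * exp (-t)) := by
          gcongr; exact exp_gaussian_le x t
      _ = _ := by ring_nf

theorem gaussMoment_pos {s : ℝ} (hs : -1 < s) (x : ℝ) : 0 < gaussMoment s x :=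
  setIntegral_pos_of_continuousOn isOpen_Ioi (continuousOn_gaussMoment_integrand s x)
    (integrableOn_gaussMoment_integrand hs x) (fun t (ht : 0 < t) => by positivity)
    (one_pos : (0 : ℝ) < 1) (by positivity)

theorem hasDerivAt_gaussMoment {s : ℝ} (hs : -1 < s) (x₀ : ℝ) :
    HasDerivAt (gaussMoment s) (-gaussMoment (s + 1) x₀) x₀ := by
  have hderiv : ∀ t > (0 : ℝ), ∀ x : ℝ, HasDerivAt (fun x => t ^ s * exp (-t ^ 2 / 2 - x * t))
      (-(t ^ (s + 1) * exp (-t ^ 2 / 2 - x * t))) x := fun t ht x => by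
    refine ((((hasDerivAt_id x).mul_const t).const_sub (-t ^ 2 / 2)).exp.const_mul
      (t ^ s)).congr_deriv ?_
    rw [rpow_add_one ht.ne', id]
    ring
  have hbound : ∀ t > (0 : ℝ), ∀ x ∈ Metric.ball x₀ 1,
      ‖-(t ^ (s + 1) * exp (-t ^ 2 / 2 - x * t))‖ ≤
        t ^ (s + 1) * exp (-t ^ 2 / 2 - (x₀ - 1) * t) := fun t ht x hx => by
    have hx : x₀ - 1 < x := by linarith [(abs_lt.1 (Metric.mem_ball.1 hx)).1, Real.dist_eq x x₀]
    rw [norm_neg, norm_of_nonneg (by positivity)]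
    gcongr
  have key := hasDerivAt_integral_of_dominated_loc_of_deriv_le (Metric.ball_mem_nhds x₀ one_pos)
    (Eventually.of_forall fun x =>
      (continuousOn_gaussMoment_integrand s x).aestronglyMeasurable measurableSet_Ioi)
    (integrableOn_gaussMoment_integrand hs x₀)
    ((continuousOn_gaussMoment_integrand (s + 1) x₀).neg.aestronglyMeasurable measurableSet_Ioi)
    (ae_restrict_of_forall_mem measurableSet_Ioi hbound)
    (integrableOn_gaussMoment_integrand (by linarith) (x₀ - 1))
    (ae_restrict_of_forall_mem measurableSet_Ioi fun t ht x _ => hderiv t ht x)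
  rw [gaussMoment, ← integral_neg]
  exact key.2

theorem gaussMoment_add_two {s : ℝ} (hs : -1 < s) (x : ℝ) :
    gaussMoment (s + 2) x = (s + 1) * gaussMoment s x - x * gaussMoment (s + 1) x := by
  set g : ℝ → ℝ := fun t => t ^ (s + 1) * exp (-t ^ 2 / 2 - x * t)
  have hint {r : ℝ} (hr : -1 < r) := integrableOn_gaussMoment_integrand hr x
  have hderiv : ∀ t ∈ Ioi (0 : ℝ), HasDerivAt g ((s + 1) * (t ^ s * exp (-t ^ 2 / 2 - x * t))
      - x * (t ^ (s + 1) * exp (-t ^ 2 / 2 - x * t)) - t ^ (s + 2) * exp (-t ^ 2 / 2 - x * t)) t :=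
    fun t (ht : 0 < t) => by
      refine ((hasDerivAt_rpow_const (Or.inl ht.ne')).mul
        (hasDerivAt_exp_gaussian x t)).congr_deriv ?_
      rw [add_sub_cancel_right, show s + 2 = s + 1 + 1 by ring, rpow_add_one ht.ne' (s + 1),
        rpow_add_one ht.ne' s]
      ring
  have hg0 : g 0 = 0 := by simp [g, zero_rpow (by linarith : s + 1 ≠ 0)]
  have h₁ := (hint hs).const_mul (s + 1)
  have h₂ := (hint (by linarith : -1 < s + 1)).const_mul x
  have h₃ := hint (by linarith : -1 < s + 2)
  have hibp := integral_Ioi_of_hasDerivAt_of_tendsto (f := g)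
    ((continuousAt_rpow_const 0 (s + 1) (Or.inr (by linarith))).continuousWithinAt.mul
      (by fun_prop))
    hderiv ((h₁.sub h₂).sub h₃) (tendsto_gaussMoment_integrand_atTop (s + 1) x)
  rw [hg0, sub_zero, integral_sub _ h₃, integral_sub h₁ h₂, integral_const_mul,
    integral_const_mul] at hibp
  · unfold gaussMoment
    linarith
  · exact h₁.sub h₂

noncomputable def momentHankel (n : ℕ) (a x : ℝ) : Matrix (Fin n) (Fin n) ℝ :=
  Matrix.of fun i j => gaussMoment (a + (i + j : ℕ)) x

theorem momentHankel_posDef {a : ℝ} (ha : -1 < a) (n : ℕ) (x : ℝ) :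
    (momentHankel n a x).PosDef := by
  refine .of_dotProduct_mulVec_pos (.ext fun i j => ?_) fun v hv => ?_
  · simp [momentHankel, add_comm]
  set q : ℝ[X] := ∑ i, C (v i) * X ^ (i : ℕ)
  have hq : q ≠ 0 := by
    obtain ⟨i, hi⟩ := Function.ne_iff.1 hv
    intro h0
    apply hi
    simpa [q, finsetSum_coeff, coeff_C_mul_X_pow, Fin.val_inj] using congrArg (coeff · i) h0
  obtain ⟨t₀, ht₀, hqt₀⟩ := exists_pos_eval_ne_zero hq
  have hterm (i j : Fin n) := integrableOn_gaussMoment_integrand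
    (by linarith [(i + j : ℕ).cast_nonneg (α := ℝ)] : -1 < a + ((i + j : ℕ) : ℝ)) x
  have hexpand : ∀ t ∈ Ioi (0 : ℝ), (q.eval t) ^ 2 * (t ^ a * exp (-t ^ 2 / 2 - x * t)) =
      ∑ i, ∑ j, v i * v j * (t ^ (a + (i + j : ℕ)) * exp (-t ^ 2 / 2 - x * t)) := by
    intro t (ht : 0 < t)
    rw [show q.eval t = ∑ i : Fin n, v i * t ^ (i : ℕ) by simp [q, eval_finsetSum]]
    simp_rw [rpow_add ht, rpow_natCast, pow_add, sq, Finset.sum_mul_sum, Finset.sum_mul]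
    exact Finset.sum_congr rfl fun i _ => Finset.sum_congr rfl fun j _ => by ring
  have hform : star v ⬝ᵥ (momentHankel n a x *ᵥ v) =
      ∫ t in Ioi 0, (q.eval t) ^ 2 * (t ^ a * exp (-t ^ 2 / 2 - x * t)) := by
    rw [setIntegral_congr_fun measurableSet_Ioi hexpand,
      integral_finsetSum _ fun i _ => integrable_finsetSum _ fun j _ => (hterm i j).const_mul _]
    simp only [star_trivial, dotProduct, mulVec]
    refine Finset.sum_congr rfl fun i _ => ?_
    rw [integral_finsetSum _ fun j _ => (hterm i j).const_mul _, Finset.mul_sum]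
    refine Finset.sum_congr rfl fun j _ => ?_
    rw [integral_const_mul]
    simp only [momentHankel, gaussMoment, of_apply]
    ring
  rw [hform]
  refine setIntegral_pos_of_continuousOn isOpen_Ioi
    ((q.continuous.continuousOn.pow 2).mul (continuousOn_gaussMoment_integrand a x))
    (IntegrableOn.congr_fun (integrable_finsetSum _ fun i _ => integrable_finsetSum _ fun j _ =>
      (hterm i j).const_mul _) (fun t ht => (hexpand t ht).symm) measurableSet_Ioi)
    (fun t (ht : 0 < t) => by positivity) ht₀ ?_
  exact mul_ne_zero (pow_ne_zero 2 hqt₀) (by positivity)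

theorem det_momentHankel_three {a : ℝ} (ha : -1 < a) (x : ℝ) :
    (momentHankel 3 a x).det = 2 * gaussMoment a x * gaussMoment (a + 2) x ^ 2
      - gaussMoment (a + 1) x ^ 2 * gaussMoment (a + 2) x
      - gaussMoment a x * gaussMoment (a + 1) x * gaussMoment (a + 3) x := by
  rw [det_fin_three]
  have h₂ := gaussMoment_add_two ha x
  have h₃ := gaussMoment_add_two (s := a + 1) (by linarith) x
  have h₄ := gaussMoment_add_two (s := a + 2) (by linarith) x
  rw [show a + 1 + 2 = a + 3 by ring, show a + 1 + 1 = a + 2 by ring] at h₃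
  rw [show a + 2 + 2 = a + 4 by ring, show a + 2 + 1 = a + 3 by ring] at h₄
  simp only [momentHankel, of_apply]
  norm_num
  rw [h₄, h₃, h₂]
  ring

theorem strictAnti_gaussMoment_ratio {a : ℝ} (ha : -1 < a) :
    StrictAnti fun x => gaussMoment (a + 1) x ^ 2 / (gaussMoment a x * gaussMoment (a + 2) x) := by
  refine strictAnti_of_deriv_neg fun x => ?_
  have hA := gaussMoment_pos ha x
  have hB := gaussMoment_pos (by linarith : -1 < a + 1) x
  have hC := gaussMoment_pos (by linarith : -1 < a + 2) x
  have hdet := (momentHankel_posDef ha 3 x).det_pos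
  rw [det_momentHankel_three ha x] at hdet
  have hdA := hasDerivAt_gaussMoment ha x
  have hdB := hasDerivAt_gaussMoment (by linarith : -1 < a + 1) x
  have hdC := hasDerivAt_gaussMoment (by linarith : -1 < a + 2) x
  rw [add_assoc, one_add_one_eq_two] at hdB
  rw [add_assoc, two_add_one_eq_three] at hdC
  have hderiv : HasDerivAt
      (fun x => gaussMoment (a + 1) x ^ 2 / (gaussMoment a x * gaussMoment (a + 2) x)) _ x :=
    (hdB.pow 2).div (hdA.mul hdC) (by positivity)
  rw [hderiv.deriv]
  refine div_neg_of_neg_of_pos ?_ (by positivity)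
  simp only [Pi.pow_apply, Nat.cast_ofNat, pow_one, Nat.add_one_sub_one]
  linear_combination mul_pos hB hdet

theorem stmt8 (ν : ℝ) (hν : ν < 0) :
    StrictAnti (fun x : ℝ => (D (ν - 1) x) ^ 2 / (D ν x * D (ν - 2) x)) := by
  have ha : -1 < -ν - 1 := by linarith
  have hΓ₀ := Gamma_pos_of_pos (by linarith : 0 < -ν)
  have hΓ₁ := Gamma_pos_of_pos (by linarith : 0 < -(ν - 1))
  have hΓ₂ := Gamma_pos_of_pos (by linarith : 0 < -(ν - 2))
  have hratio : (fun x => D (ν - 1) x ^ 2 / (D ν x * D (ν - 2) x)) = fun x =>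
      Gamma (-ν) * Gamma (-(ν - 2)) / Gamma (-(ν - 1)) ^ 2 * (gaussMoment (-ν - 1 + 1) x ^ 2 /
        (gaussMoment (-ν - 1) x * gaussMoment (-ν - 1 + 2) x)) := by
    funext x
    have hA := gaussMoment_pos ha x
    have hC := gaussMoment_pos (by linarith : -1 < -ν - 1 + 2) x
    simp only [D, G_eq_gaussMoment]
    rw [show -(ν - 1) - 1 = -ν - 1 + 1 by ring, show -(ν - 2) - 1 = -ν - 1 + 2 by ring]
    field_simp
  rw [hratio]
  exact (strictAnti_gaussMoment_ratio ha).const_mul (by positivity)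
end
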